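/- arXiv:2106.10513 — 2 statements merged into one kernel-verified Lean document; each statement's English description precedes it below -/
import Mathlib

section
/- Let G be a strongly connected directed graph on n nodes with Laplacian L, and let A_d = diag(a₁, …, a_n) be a nonnegative diagonal matrix with at least one aᵢ > 0 in every 'reachability class'; in particular assume every node either has aᵢ > 0 or has a directed path from some node with positive a. Let Γ = diag(1/(dᵢ + aᵢ)) where dᵢ is the in-degree of node i and dᵢ + aᵢ > 0 for all i. Then M = I − Γ(L + A_d) is Schur stable. -/
/-!
Let `v` be an eigenvector of `M` for an eigenvalue `μ` with `‖μ‖ ≥ 1`, and `i` a coordinate where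
`‖v i‖` is maximal. As `M` is nonnegative with row sums at most `1`,
`‖v i‖ ≤ ‖μ‖ ‖v i‖ ≤ ∑ₖ M i k ‖v k‖ ≤ (∑ₖ M i k) ‖v i‖ ≤ ‖v i‖`, so row `i` sums to `1` and every
`k` with `M i k > 0` is maximal as well. Maximality therefore spreads backwards along the edges
of the graph until it reaches a node with `a j > 0`, whose row sum `d j / (d j + a j)` is `< 1`.
-/

open Matrix Relation

theorem Matrix.exists_mulVec_eq_smul_of_mem_spectrum {K ι : Type*} [Field K] [Fintype ι]
    [DecidableEq ι] {A : Matrix ι ι K} {μ : K} (hμ : μ ∈ spectrum K A) :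
    ∃ v ≠ 0, A *ᵥ v = μ • v := by
  rw [← Matrix.spectrum_toLin', ← Module.End.hasEigenvalue_iff_mem_spectrum] at hμ
  obtain ⟨v, hv⟩ := hμ.exists_hasEigenvector
  exact ⟨v, hv.2, by simpa using hv.apply_eq_smul⟩

namespace Matrix

variable {ι : Type*} [Fintype ι] {M : Matrix ι ι ℝ} {μ : ℂ} {v : ι → ℂ}

theorem norm_le_sum_mul_norm_of_mulVec_eq_smul (hM : ∀ i j, 0 ≤ M i j)
    (hv : M.map Complex.ofReal *ᵥ v = μ • v) (hμ : 1 ≤ ‖μ‖) (i : ι) :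
    ‖v i‖ ≤ ∑ k, M i k * ‖v k‖ :=
  calc ‖v i‖ ≤ ‖μ‖ * ‖v i‖ := le_mul_of_one_le_left (norm_nonneg _) hμ
    _ = ‖∑ k, (M i k : ℂ) * v k‖ := by
      rw [← norm_mul, ← smul_eq_mul, ← Pi.smul_apply, ← hv]; rfl
    _ ≤ ∑ k, ‖(M i k : ℂ) * v k‖ := norm_sum_le _ _
    _ = ∑ k, M i k * ‖v k‖ := by
      simp only [norm_mul, Complex.norm_real, Real.norm_of_nonneg (hM i _)]

variable {i : ι}

theorem one_le_sum_of_isMax_norm (hM : ∀ i j, 0 ≤ M i j)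
    (hv : M.map Complex.ofReal *ᵥ v = μ • v) (hμ : 1 ≤ ‖μ‖)
    (hmax : ∀ k, ‖v k‖ ≤ ‖v i‖) (hvi : v i ≠ 0) : 1 ≤ ∑ k, M i k := by
  have : ‖v i‖ ≤ (∑ k, M i k) * ‖v i‖ :=
    calc ‖v i‖ ≤ ∑ k, M i k * ‖v k‖ := norm_le_sum_mul_norm_of_mulVec_eq_smul hM hv hμ i
      _ ≤ ∑ k, M i k * ‖v i‖ := by gcongr with k; exacts [hM i k, hmax k]
      _ = (∑ k, M i k) * ‖v i‖ := Finset.sum_mul .. |>.symm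
  exact (le_mul_iff_one_le_left (norm_pos_iff.mpr hvi)).mp this

theorem norm_eq_of_isMax_norm_of_pos (hM : ∀ i j, 0 ≤ M i j)
    (hv : M.map Complex.ofReal *ᵥ v = μ • v) (hμ : 1 ≤ ‖μ‖) (hrow : ∑ k, M i k ≤ 1)
    (hmax : ∀ k, ‖v k‖ ≤ ‖v i‖) {j : ι} (hij : 0 < M i j) : ‖v j‖ = ‖v i‖ := by
  refine (hmax j).antisymm (not_lt.mp fun hlt => lt_irrefl ‖v i‖ ?_)
  calc ‖v i‖ ≤ ∑ k, M i k * ‖v k‖ := norm_le_sum_mul_norm_of_mulVec_eq_smul hM hv hμ i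
    _ < ∑ k, M i k * ‖v i‖ :=
      Finset.sum_lt_sum (fun k _ => mul_le_mul_of_nonneg_left (hmax k) (hM i k))
        ⟨j, Finset.mem_univ j, mul_lt_mul_of_pos_left hlt hij⟩
    _ = (∑ k, M i k) * ‖v i‖ := Finset.sum_mul .. |>.symm
    _ ≤ ‖v i‖ := mul_le_of_le_one_left (norm_nonneg _) hrow

theorem norm_eq_of_isMax_norm_of_reflTransGen (hM : ∀ i j, 0 ≤ M i j)
    (hv : M.map Complex.ofReal *ᵥ v = μ • v) (hμ : 1 ≤ ‖μ‖) (hrow : ∀ i, ∑ k, M i k ≤ 1)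
    (hmax : ∀ k, ‖v k‖ ≤ ‖v i‖) {j : ι} (hji : ReflTransGen (fun p q => 0 < M q p) j i) :
    ‖v j‖ = ‖v i‖ := by
  induction hji using ReflTransGen.head_induction_on with
  | refl => rfl
  | head hpq _ ih =>
    rw [← ih]
    exact norm_eq_of_isMax_norm_of_pos hM hv hμ (hrow _) (ih ▸ hmax) hpq

theorem norm_lt_one_of_mem_spectrum_of_reflTransGen_sum_lt_one [DecidableEq ι]
    (hM : ∀ i j, 0 ≤ M i j) (hrow : ∀ i, ∑ k, M i k ≤ 1)
    (hleak : ∀ i, ∃ j, ∑ k, M j k < 1 ∧ ReflTransGen (fun p q => 0 < M q p) j i) :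
    ∀ μ ∈ spectrum ℂ (M.map Complex.ofReal), ‖μ‖ < 1 := by
  intro μ hμ
  by_contra! hμ1
  obtain ⟨v, hv0, hv⟩ := exists_mulVec_eq_smul_of_mem_spectrum hμ
  obtain ⟨k, hk⟩ := Function.ne_iff.mp hv0
  have : Nonempty ι := ⟨k⟩
  obtain ⟨i, hmax⟩ := Finite.exists_max fun i => ‖v i‖
  obtain ⟨j, hj, hji⟩ := hleak i
  have hvj := norm_eq_of_isMax_norm_of_reflTransGen hM hv hμ1 hrow hmax hji
  have hj_max : ∀ k, ‖v k‖ ≤ ‖v j‖ := hvj ▸ hmax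
  have hvj0 : v j ≠ 0 := norm_pos_iff.mp ((norm_pos_iff.mpr hk).trans_le (hj_max k))
  exact hj.not_ge (one_le_sum_of_isMax_norm hM hv hμ1 hj_max hvj0)

end Matrix

section LeaderFollowing

variable {ι : Type*} [DecidableEq ι] {adj : ι → ι → Bool} {a d : ι → ℝ}
  {M : Matrix ι ι ℝ}

theorem leaderFollowing_apply {L : Matrix ι ι ℝ} (hpos : ∀ i, 0 < d i + a i)
    (hL : ∀ i j, L i j = if i = j then d i else (if adj j i then -1 else 0))
    (hM : ∀ i j, M i j = (if i = j then 1 else 0)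
      - (L i j + if i = j then a i else 0) / (d i + a i))
    (i j : ι) : M i j = if i ≠ j ∧ adj j i then (d i + a i)⁻¹ else 0 := by
  rw [hM, hL]
  by_cases hij : i = j
  · subst hij
    simp [div_self (hpos i).ne']
  · by_cases hadj : adj j i <;> simp [hij, hadj, div_eq_inv_mul]

variable (hpos : ∀ i, 0 < d i + a i)
  (hM : ∀ i j, M i j = if i ≠ j ∧ adj j i then (d i + a i)⁻¹ else 0)
include hpos hM

theorem leaderFollowing_nonneg (i j : ι) : 0 ≤ M i j := by
  rw [hM]
  split_ifs
  exacts [(inv_pos.mpr (hpos i)).le, le_rfl]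

theorem leaderFollowing_pos {i j : ι} (hij : i ≠ j) (hadj : adj j i) : 0 < M i j := by
  rw [hM, if_pos ⟨hij, hadj⟩]
  exact inv_pos.mpr (hpos i)

theorem leaderFollowing_sum_le [Fintype ι]
    (hd : ∀ i, d i = ((Finset.univ.filter (fun j => adj j i = true)).card : ℝ)) (i : ι) :
    ∑ j, M i j ≤ d i / (d i + a i) :=
  calc ∑ j, M i j ≤ ∑ j, if adj j i then (d i + a i)⁻¹ else 0 := by
        gcongr with j
        rw [hM]
        split_ifs with h₁ h₂ h₂
        · exact le_rfl
        · exact absurd h₁.2 h₂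
        · exact (inv_pos.mpr (hpos i)).le
        · exact le_rfl
    _ = d i / (d i + a i) := by
        rw [← Finset.sum_filter, Finset.sum_const, nsmul_eq_mul, ← hd, div_eq_mul_inv]

theorem leaderFollowing_reflTransGen {i j : ι}
    (hji : TransGen (fun p q => adj p q = true) j i) :
    ReflTransGen (fun p q => 0 < M q p) j i := by
  refine reflTransGen_closed (fun p q hpq => ?_) j i hji.to_reflTransGen
  by_cases h : p = q
  · exact h ▸ .refl
  · exact .single (leaderFollowing_pos hpos hM (Ne.symm h) hpq)

end LeaderFollowing

theorem leader_following_matrix_schur_stable_general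
    (n : ℕ) (adj : Fin n → Fin n → Bool)
    (a : Fin n → ℝ) (ha : ∀ i, 0 ≤ a i)
    (hreach : ∀ i : Fin n, 0 < a i ∨ ∃ j : Fin n, 0 < a j ∧
      Relation.TransGen (fun p q : Fin n => adj p q = true) j i)
    (d : Fin n → ℝ)
    (hd : ∀ i, d i = ((Finset.univ.filter (fun j => adj j i = true)).card : ℝ))
    (hpos : ∀ i, 0 < d i + a i)
    (L : Matrix (Fin n) (Fin n) ℝ)
    (hL : ∀ i j, L i j = if i = j then d i else (if adj j i then -1 else 0))
    (M : Matrix (Fin n) (Fin n) ℝ)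
    (hM : ∀ i j, M i j = (if i = j then 1 else 0)
      - (L i j + if i = j then a i else 0) / (d i + a i)) :
    ∀ μ ∈ spectrum ℂ (M.map (Complex.ofReal)), ‖μ‖ < 1 := by
  have hM' := leaderFollowing_apply hpos hL hM
  have hrow := leaderFollowing_sum_le hpos hM' hd
  have hleak (j : Fin n) (hj : 0 < a j) : ∑ k, M j k < 1 :=
    (hrow j).trans_lt ((div_lt_one (hpos j)).mpr (by linarith))
  refine Matrix.norm_lt_one_of_mem_spectrum_of_reflTransGen_sum_lt_one
    (leaderFollowing_nonneg hpos hM')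
    (fun i => (hrow i).trans ((div_le_one (hpos i)).mpr (by linarith [ha i]))) fun i => ?_
  rcases hreach i with hi | ⟨j, hj, hji⟩
  · exact ⟨i, hleak i hi, .refl⟩
  · exact ⟨j, hleak j hj, leaderFollowing_reflTransGen hpos hM' hji⟩

/-- For a strongly connected digraph with Laplacian `L`, a nonnegative
diagonal matrix `A_d = diag(a)` such that every node either has `aᵢ > 0` or is reached
by a directed path from a node with positive `a`, and `Γ = diag(1/(dᵢ + aᵢ))` with
`dᵢ + aᵢ > 0`, the leader-following consensus matrix `M = I - Γ(L + A_d)` is Schur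
stable. Here `adj j i` means there is an edge from `j` to `i`, and `dᵢ` is the
in-degree of node `i`. -/
theorem leader_following_matrix_schur_stable
    (n : ℕ) (hn : 0 < n) (adj : Fin n → Fin n → Bool)
    (hirrefl : ∀ i, adj i i = false)
    (hconn : ∀ i j : Fin n, i ≠ j →
      Relation.TransGen (fun a b : Fin n => adj a b = true) i j)
    (a : Fin n → ℝ) (ha : ∀ i, 0 ≤ a i)
    (hreach : ∀ i : Fin n, 0 < a i ∨ ∃ j : Fin n, 0 < a j ∧
      Relation.TransGen (fun p q : Fin n => adj p q = true) j i)
    (d : Fin n → ℝ)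
    (hd : ∀ i, d i = ((Finset.univ.filter (fun j => adj j i = true)).card : ℝ))
    (hpos : ∀ i, 0 < d i + a i)
    (L : Matrix (Fin n) (Fin n) ℝ)
    (hL : ∀ i j, L i j = if i = j then d i else (if adj j i then -1 else 0))
    (M : Matrix (Fin n) (Fin n) ℝ)
    (hM : ∀ i j, M i j = (if i = j then 1 else 0)
      - (L i j + if i = j then a i else 0) / (d i + a i)) :
    ∀ μ ∈ spectrum ℂ (M.map (Complex.ofReal)), ‖μ‖ < 1 :=
  leader_following_matrix_schur_stable_general n adj a ha hreach d hd hpos L hL M hM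
end

section
/- Consider steady-state equations: x = Rx − (α/n)(I ⊗ 1ᵀ)ψ and ψ = (C ⊗ I)ψ, where R is row-stochastic irreducible with normalized left eigenvector uᵀ (uᵀ1 = n), C is column-stochastic irreducible with normalized right eigenvector v (1ᵀv = n), α > 0, and uᵀv ≠ 0. Then ψ = v ⊗ ψ̄ with ψ̄ = (1/n)(1ᵀ ⊗ I)ψ satisfying 1ᵀψ̄ = 0, and x = τ·1 for some scalar τ, i.e., the steady state is a consensus state. -/
/-!
Every column of `ψ` is a fixed vector of `C`. Since `Cᵀ` is row-stochastic and irreducible, a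
maximum principle shows that its fixed vectors are the constants, so the fixed space of `Cᵀ`, and
hence (by rank–nullity and `rank Cᵀ = rank C`) that of `C`, is one-dimensional; thus every
column of `ψ` is a multiple of `v`. Pairing the `x`-equation with the left eigenvector `u` kills
`x` and leaves `(α / n) (uᵀv) (1ᵀψ̄) = 0`. Hence the coupling term vanishes, `x` is a fixed vector
of `R`, and the maximum principle once more makes it constant.
-/

open Matrix

namespace Matrix

variable {ι 𝕜 : Type*} [Fintype ι]

theorem dotProduct_eq_zero_of_eq_mulVec_sub {R : Type*} [CommRing R]
    {A : Matrix ι ι R} {u x w : ι → R} (hu : u ᵥ* A = u) (hx : x = A *ᵥ x - w) :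
    u ⬝ᵥ w = 0 := by
  have h := congrArg (u ⬝ᵥ ·) hx
  simp only [dotProduct_sub, dotProduct_mulVec, hu] at h
  linear_combination h

section Field

variable [Field 𝕜]

theorem finrank_ker_mulVecLin_transpose (A : Matrix ι ι 𝕜) :
    Module.finrank 𝕜 (LinearMap.ker Aᵀ.mulVecLin) =
      Module.finrank 𝕜 (LinearMap.ker A.mulVecLin) := by
  have hA := LinearMap.finrank_range_add_finrank_ker A.mulVecLin
  have hAt := LinearMap.finrank_range_add_finrank_ker Aᵀ.mulVecLin
  rw [← rank, ← rank_transpose] at hA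
  rw [← rank] at hAt
  omega

theorem mem_ker_sub_one_mulVecLin_iff [DecidableEq ι] {A : Matrix ι ι 𝕜} {x : ι → 𝕜} :
    x ∈ LinearMap.ker (A - 1).mulVecLin ↔ A *ᵥ x = x := by
  rw [LinearMap.mem_ker, mulVecLin_apply, sub_mulVec, one_mulVec, sub_eq_zero]

end Field

variable [DecidableEq ι] [Field 𝕜] [LinearOrder 𝕜] [IsStrictOrderedRing 𝕜]

theorem eq_of_mulVec_eq_of_isMax_of_pos {M : Matrix ι ι 𝕜} {x : ι → 𝕜}
    (hM : M ∈ rowStochastic 𝕜 ι) (hx : M *ᵥ x = x)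
    {a b : ι} (hb : ∀ k, x k ≤ x b) (hba : 0 < M b a) : x a = x b := by
  have hsum : ∑ k, M b k * x k = ∑ k, M b k * x b := by
    rw [← Finset.sum_mul, sum_row_of_mem_rowStochastic hM, one_mul]
    exact congrFun hx b
  have hle : ∀ k ∈ Finset.univ, M b k * x k ≤ M b k * x b :=
    fun k _ => mul_le_mul_of_nonneg_left (hb k) (nonneg_of_mem_rowStochastic hM)
  exact mul_left_cancel₀ hba.ne' ((Finset.sum_eq_sum_iff_of_le hle).mp hsum a (Finset.mem_univ a))

theorem eq_of_mulVec_eq_of_mem_rowStochastic {M : Matrix ι ι 𝕜} {x : ι → 𝕜}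
    (hM : M ∈ rowStochastic 𝕜 ι)
    (hirr : ∀ i j : ι, i ≠ j → Relation.TransGen (fun a b : ι => 0 < M b a) i j)
    (hx : M *ᵥ x = x) (i j : ι) : x i = x j := by
  obtain ⟨m, -, hm⟩ := Finset.exists_max_image Finset.univ x ⟨i, Finset.mem_univ i⟩
  have hmax : ∀ k, x k ≤ x m := fun k => hm k (Finset.mem_univ k)
  have hreach : ∀ k, Relation.TransGen (fun a b : ι => 0 < M b a) k m → x k = x m := by
    intro k hk
    induction hk using Relation.TransGen.head_induction_on with
    | single hpos => exact eq_of_mulVec_eq_of_isMax_of_pos hM hx hmax hpos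
    | head hpos _ ih =>
      exact (eq_of_mulVec_eq_of_isMax_of_pos hM hx (fun k => ih ▸ hmax k) hpos).trans ih
  have heq_max : ∀ k, x k = x m := fun k =>
    (eq_or_ne k m).elim (fun hkm => hkm ▸ rfl) fun hkm => hreach k (hirr k m hkm)
  rw [heq_max i, heq_max j]

theorem ker_sub_one_mulVecLin_eq_span_one {M : Matrix ι ι 𝕜} (hM : M ∈ rowStochastic 𝕜 ι)
    (hirr : ∀ i j : ι, i ≠ j → Relation.TransGen (fun a b : ι => 0 < M b a) i j) :
    LinearMap.ker (M - 1).mulVecLin = Submodule.span 𝕜 {1} := by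
  apply le_antisymm
  · intro x hx
    rw [mem_ker_sub_one_mulVecLin_iff] at hx
    rcases isEmpty_or_nonempty ι with hι | ⟨⟨i₀⟩⟩
    · simp [Subsingleton.elim x 0]
    · refine Submodule.mem_span_singleton.mpr ⟨x i₀, funext fun i => ?_⟩
      simp [eq_of_mulVec_eq_of_mem_rowStochastic hM hirr hx i i₀]
  · rw [Submodule.span_singleton_le_iff_mem, mem_ker_sub_one_mulVecLin_iff]
    exact one_vecMul_of_mem_rowStochastic hM

theorem exists_eq_smul_of_mulVec_eq_of_mem_colStochastic {C : Matrix ι ι 𝕜}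
    (hC : C ∈ colStochastic 𝕜 ι)
    (hirr : ∀ i j : ι, i ≠ j → Relation.TransGen (fun a b : ι => 0 < C b a) i j)
    {v w : ι → 𝕜} (hv : C *ᵥ v = v) (hv0 : v ≠ 0) (hw : C *ᵥ w = w) :
    ∃ c : 𝕜, w = c • v := by
  have : Nonempty ι := by
    by_contra h
    exact hv0 (funext fun i => (h ⟨i⟩).elim)
  have hCt : Cᵀ ∈ rowStochastic 𝕜 ι := transpose_mem_rowStochastic_iff_mem_colStochastic.mpr hC
  have hirrt : ∀ i j : ι, i ≠ j → Relation.TransGen (fun a b : ι => 0 < Cᵀ b a) i j :=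
    fun i j hij => (hirr j i hij.symm).swap
  have hfinrank : Module.finrank 𝕜 (LinearMap.ker (C - 1).mulVecLin) = 1 := by
    rw [← finrank_ker_mulVecLin_transpose, transpose_sub, transpose_one,
      ker_sub_one_mulVecLin_eq_span_one hCt hirrt, finrank_span_singleton one_ne_zero]
  have hspan : Submodule.span 𝕜 {v} = LinearMap.ker (C - 1).mulVecLin :=
    Submodule.eq_of_le_of_finrank_eq
      (Submodule.span_singleton_le_iff_mem _ _ |>.mpr (mem_ker_sub_one_mulVecLin_iff.mpr hv))
      (by rw [finrank_span_singleton hv0, hfinrank])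
  obtain ⟨c, hc⟩ := Submodule.mem_span_singleton.mp (hspan ▸ mem_ker_sub_one_mulVecLin_iff.mpr hw)
  exact ⟨c, hc.symm⟩

end Matrix

theorem steady_state_consensus_general
    (n : ℕ) (hn : 0 < n) (α : ℝ) (hα : 0 < α)
    (R C : Matrix (Fin n) (Fin n) ℝ)
    (hRnonneg : ∀ i j, 0 ≤ R i j) (hRrow : ∀ i, ∑ j, R i j = 1)
    (hRirr : ∀ i j : Fin n, i ≠ j →
      Relation.TransGen (fun a b : Fin n => 0 < R b a) i j)
    (hCnonneg : ∀ i j, 0 ≤ C i j) (hCcol : ∀ j, ∑ i, C i j = 1)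
    (hCirr : ∀ i j : Fin n, i ≠ j →
      Relation.TransGen (fun a b : Fin n => 0 < C b a) i j)
    (u v : Fin n → ℝ)
    (hu : Matrix.vecMul u R = u)
    (hv : C.mulVec v = v) (hvnorm : ∑ i, v i = (n : ℝ))
    (huv : ∑ i, u i * v i ≠ 0)
    (x : Fin n → ℝ) (ψ : Fin n × Fin n → ℝ)
    (hxeq : ∀ i, x i = (∑ j, R i j * x j) - (α / (n : ℝ)) * ∑ j, ψ (i, j))
    (hψeq : ∀ i j, ψ (i, j) = ∑ l, C i l * ψ (l, j)) :
    (∀ i j, ψ (i, j) = v i * ((1 / (n : ℝ)) * ∑ l, ψ (l, j))) ∧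
    (∑ j, (1 / (n : ℝ)) * ∑ l, ψ (l, j)) = 0 ∧
    (∃ τ : ℝ, ∀ i, x i = τ) := by
  have hn' : (n : ℝ) ≠ 0 := by positivity
  have hv0 : v ≠ 0 := by
    rintro rfl
    exact hn' (by simpa using hvnorm.symm)
  choose c hc using fun j => exists_eq_smul_of_mulVec_eq_of_mem_colStochastic
    (mem_colStochastic_iff_sum.mpr ⟨hCnonneg, hCcol⟩) hCirr hv hv0
    (w := fun l => ψ (l, j)) (funext fun i => (hψeq i j).symm)
  have hψ : ∀ i j, ψ (i, j) = c j * v i := fun i j => congrFun (hc j) i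
  have hψbar : ∀ j, 1 / (n : ℝ) * ∑ l, ψ (l, j) = c j := by
    intro j
    simp only [hψ, ← Finset.mul_sum, hvnorm]
    field_simp
  have hcsum : ∑ j, c j = 0 := by
    have hpair := dotProduct_eq_zero_of_eq_mulVec_sub hu
      (w := fun i => α / n * ∑ j, ψ (i, j)) (funext hxeq)
    have hexpand : ∀ i, u i * (α / n * ∑ j, ψ (i, j)) = α / n * (∑ j, c j) * (u i * v i) := by
      intro i
      simp only [hψ, ← Finset.sum_mul]
      ring
    simp only [dotProduct, hexpand, ← Finset.mul_sum] at hpair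
    simpa [hα.ne', hn', huv] using hpair
  refine ⟨fun i j => by rw [hψbar, hψ, mul_comm], by simp only [hψbar, hcsum], ?_⟩
  have hcoupling : ∀ i, ∑ j, ψ (i, j) = 0 := fun i => by
    simp only [hψ, ← Finset.sum_mul, hcsum, zero_mul]
  have hRx : R *ᵥ x = x := funext fun i => by
    rw [hxeq i, hcoupling, mul_zero, sub_zero]
    rfl
  exact ⟨x ⟨0, hn⟩, fun i => eq_of_mulVec_eq_of_mem_rowStochastic
    (mem_rowStochastic_iff_sum.mpr ⟨hRnonneg, hRrow⟩) hRirr hRx i _⟩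

/-- Steady states of the NE seeking algorithm: if
`x = Rx - (α/n)(I ⊗ 1ᵀ)ψ` and `ψ = (C ⊗ I)ψ`, with `R` row-stochastic irreducible
(normalized left eigenvector `u`), `C` column-stochastic irreducible (normalized right
eigenvector `v`), `α > 0` and `uᵀv ≠ 0`, then `ψ = v ⊗ ψ̄` with `1ᵀψ̄ = 0`, and `x` is
a consensus vector. -/
theorem steady_state_consensus
    (n : ℕ) (hn : 0 < n) (α : ℝ) (hα : 0 < α)
    (R C : Matrix (Fin n) (Fin n) ℝ)
    (hRnonneg : ∀ i j, 0 ≤ R i j) (hRrow : ∀ i, ∑ j, R i j = 1)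
    (hRirr : ∀ i j : Fin n, i ≠ j →
      Relation.TransGen (fun a b : Fin n => 0 < R b a) i j)
    (hCnonneg : ∀ i j, 0 ≤ C i j) (hCcol : ∀ j, ∑ i, C i j = 1)
    (hCirr : ∀ i j : Fin n, i ≠ j →
      Relation.TransGen (fun a b : Fin n => 0 < C b a) i j)
    (u v : Fin n → ℝ)
    (hu : Matrix.vecMul u R = u) (hunorm : ∑ i, u i = (n : ℝ))
    (hv : C.mulVec v = v) (hvnorm : ∑ i, v i = (n : ℝ))
    (huv : ∑ i, u i * v i ≠ 0)
    (x : Fin n → ℝ) (ψ : Fin n × Fin n → ℝ)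
    (hxeq : ∀ i, x i = (∑ j, R i j * x j) - (α / (n : ℝ)) * ∑ j, ψ (i, j))
    (hψeq : ∀ i j, ψ (i, j) = ∑ l, C i l * ψ (l, j)) :
    (∀ i j, ψ (i, j) = v i * ((1 / (n : ℝ)) * ∑ l, ψ (l, j))) ∧
    (∑ j, (1 / (n : ℝ)) * ∑ l, ψ (l, j)) = 0 ∧
    (∃ τ : ℝ, ∀ i, x i = τ) :=
  steady_state_consensus_general n hn α hα R C hRnonneg hRrow hRirr hCnonneg hCcol hCirr u v hu hv
    hvnorm huv x ψ hxeq hψeq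
end
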